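/- arXiv:2103.05624 — 8 statements merged into one kernel-verified Lean document; each statement's English description precedes it below -/
import Mathlib

section
/- Let A be an n×n real matrix all of whose principal minors are positive (a P-matrix). Then for every q ∈ ℝⁿ there exists a unique x ∈ ℝⁿ with x ≥ 0, Ax + q ≥ 0, and xᵀ(Ax+q) = 0. -/
/-!
A P-matrix reverses the sign of no nonzero vector: if `z i * (A *ᵥ z) i ≤ 0` for all `i`, then
`D = diagonal (-(A *ᵥ z) i / z i)` is nonnegative and `(A + D) *ᵥ z` vanishes on the support `s`
of `z`, so the principal minor of `A + D` on `s` is zero; but that minor is a nonnegative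
combination of principal minors of `A`, one of which is `det A_s > 0`. Compactness of the unit
sphere makes this quantitative: `z i * (A *ᵥ z + p) i ≤ 0` for all `i` forces `‖z‖ ≤ c * ‖p‖`.
Applied to the difference of two solutions, this gives uniqueness and Lipschitz dependence of the
solution on `q`.

Existence is by induction on `n`. Fixing the last coordinate `t ≥ 0` and solving the LCP of the
leading principal submatrix, continuously in `t`, leaves only the last residual `φ t`. The a-priori
bound forces `φ T ≥ 0` for large `T`, as the corresponding vector has norm at least `T`, and the
intermediate value theorem yields a `t` with `0 ≤ φ t` and `t * φ t = 0`.
-/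

open Matrix

/-- `x` is a solution of the Linear Complementarity Problem LCP(A,q). -/
def IsLCPSol {n : ℕ} (A : Matrix (Fin n) (Fin n) ℝ) (q x : Fin n → ℝ) : Prop :=
  (∀ i, 0 ≤ x i) ∧ (∀ i, 0 ≤ (A.mulVec x + q) i) ∧ x ⬝ᵥ (A.mulVec x + q) = 0

theorem Matrix.det_add_diagonal {n R : Type*} [Fintype n] [DecidableEq n] [CommRing R]
    (B : Matrix n n R) (d : n → R) :
    (B + diagonal d).det =
      ∑ s : Finset n, (∏ i ∈ sᶜ, d i) * (B.submatrix ((↑) : s → n) (↑)).det := by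
  change detRowAlternating (B.row + (diagonal d).row) = _
  rw [detRowAlternating.map_add_univ]
  refine Finset.sum_congr rfl fun s _ => ?_
  have hrows : s.piecewise B.row (diagonal d).row
      = fun i => (if i ∈ sᶜ then d i else 1) • s.piecewise B.row (1 : Matrix n n R).row i := by
    funext i j
    by_cases hi : i ∈ s <;> simp [hi, Finset.piecewise, diagonal, one_apply]
  rw [hrows, detRowAlternating.map_smul_univ, Finset.prod_ite_mem, Finset.univ_inter,
    ← det_piecewise_one_eq_submatrix_det]
  rfl

def IsPMatrix {n : Type*} [Fintype n] [DecidableEq n] (A : Matrix n n ℝ) : Prop :=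
  ∀ s : Finset n, 0 < (A.submatrix ((↑) : s → n) (↑)).det

theorem isPMatrix_of_strictMono {n : ℕ} {A : Matrix (Fin n) (Fin n) ℝ}
    (hA : ∀ (r : ℕ) (f : Fin r → Fin n), StrictMono f → 0 < (A.submatrix f f).det) :
    IsPMatrix A := by
  intro s
  rw [← det_submatrix_equiv_self (s.orderIsoOfFin rfl).toEquiv, submatrix_submatrix]
  exact hA _ _ (s.orderEmbOfFin rfl).strictMono

namespace IsPMatrix

variable {n m : Type*} [Fintype n] [DecidableEq n] [Fintype m] [DecidableEq m] {A : Matrix n n ℝ}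

theorem det_submatrix_pos (hA : IsPMatrix A) {f : m → n} (hf : Function.Injective f) :
    0 < (A.submatrix f f).det := by
  let e : m ≃ (Finset.univ.map ⟨f, hf⟩ : Finset n) :=
    (Equiv.subtypeUnivEquiv Finset.mem_univ).symm.trans (Finset.univ.equivMap ⟨f, hf⟩)
  have := hA (Finset.univ.map ⟨f, hf⟩)
  rwa [← det_submatrix_equiv_self e, submatrix_submatrix] at this

theorem submatrix (hA : IsPMatrix A) {f : m → n} (hf : Function.Injective f) :
    IsPMatrix (A.submatrix f f) := fun s => by
  rw [submatrix_submatrix]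
  exact hA.det_submatrix_pos (hf.comp Subtype.val_injective)

theorem det_add_diagonal_pos (hA : IsPMatrix A) {d : n → ℝ} (hd : 0 ≤ d) :
    0 < (A + diagonal d).det := by
  rw [det_add_diagonal]
  refine Finset.sum_pos' (fun s _ => mul_nonneg (Finset.prod_nonneg fun i _ => hd i) (hA s).le)
    ⟨Finset.univ, Finset.mem_univ _, ?_⟩
  simpa using hA Finset.univ

theorem eq_zero_of_forall_mul_mulVec_nonpos (hA : IsPMatrix A) {z : n → ℝ}
    (hz : ∀ i, z i * (A *ᵥ z) i ≤ 0) : z = 0 := by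
  by_contra hz0
  let s := Finset.univ.filter (fun i => z i ≠ 0)
  let d : n → ℝ := fun i => -(A *ᵥ z) i / z i
  have hd : 0 ≤ d := fun i => by
    have := hz i
    rcases lt_trichotomy (z i) 0 with h | h | h
    · exact div_nonneg_of_nonpos (by nlinarith) h.le
    · simp [d, h]
    · exact div_nonneg (by nlinarith) h.le
  let M : Matrix n n ℝ := of (s.piecewise (A + diagonal d).row (1 : Matrix n n ℝ).row)
  have hMz : M *ᵥ z = 0 := by
    funext i
    by_cases hi : i ∈ s
    · have : (M *ᵥ z) i = ((A + diagonal d) *ᵥ z) i := by simp [M, mulVec, hi]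
      rw [this, add_mulVec, Pi.add_apply, mulVec_diagonal]
      simp [d, div_mul_cancel₀ _ (Finset.mem_filter.1 hi).2]
    · have : (M *ᵥ z) i = ((1 : Matrix n n ℝ) *ᵥ z) i := by simp [M, mulVec, hi]
      simpa [this, s] using hi
  have hdet : ((A + diagonal d).submatrix ((↑) : s → n) (↑)).det = 0 := by
    rw [← det_piecewise_one_eq_submatrix_det]
    exact exists_mulVec_eq_zero_iff.1 ⟨z, hz0, hMz⟩
  have hsub : (A + diagonal d).submatrix ((↑) : s → n) (↑)
      = A.submatrix (↑) (↑) + diagonal (fun i : s => d i) := by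
    rw [submatrix_add, Pi.add_apply, Pi.add_apply, submatrix_diagonal _ _ Subtype.val_injective]
    rfl
  rw [hsub] at hdet
  exact ((hA.submatrix Subtype.val_injective).det_add_diagonal_pos
    (d := fun i : s => d i) fun i => hd i).ne' hdet

theorem exists_pos_le_sum_max_mul_mulVec (hA : IsPMatrix A) :
    ∃ m > 0, ∀ u ∈ Metric.sphere (0 : n → ℝ) 1, m ≤ ∑ i, max (u i * (A *ᵥ u) i) 0 := by
  refine (isCompact_sphere (0 : n → ℝ) 1).exists_forall_le' (by fun_prop) fun u hu => ?_
  by_contra! hle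
  refine ne_zero_of_mem_unit_sphere ⟨u, hu⟩ (hA.eq_zero_of_forall_mul_mulVec_nonpos fun i => ?_)
  calc u i * (A *ᵥ u) i ≤ max (u i * (A *ᵥ u) i) 0 := le_max_left _ _
    _ ≤ ∑ j, max (u j * (A *ᵥ u) j) 0 :=
      Finset.single_le_sum (f := fun j => max (u j * (A *ᵥ u) j) 0)
        (fun j _ => le_max_right _ _) (Finset.mem_univ i)
    _ ≤ 0 := hle

theorem exists_norm_le_mul_norm (hA : IsPMatrix A) :
    ∃ c : ℝ, ∀ z p : n → ℝ, (∀ i, z i * (A *ᵥ z + p) i ≤ 0) → ‖z‖ ≤ c * ‖p‖ := by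
  obtain ⟨m, hm, hmg⟩ := hA.exists_pos_le_sum_max_mul_mulVec
  refine ⟨Fintype.card n / m, fun z p hzp => ?_⟩
  rcases eq_or_ne z 0 with rfl | hz
  · rw [norm_zero]; positivity
  set r := ‖z‖
  have hr : 0 < r := norm_pos_iff.2 hz
  have hu : r⁻¹ • z ∈ Metric.sphere (0 : n → ℝ) 1 := by
    simp [norm_smul, r, hr.ne']
  have hterm : ∀ i, max ((r⁻¹ • z) i * (A *ᵥ (r⁻¹ • z)) i) 0 ≤ ‖p‖ / r := by
    intro i
    have hzi : z i * (A *ᵥ z) i ≤ r * ‖p‖ :=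
      calc z i * (A *ᵥ z) i ≤ -(z i * p i) := by
            have := hzp i
            rw [Pi.add_apply, mul_add] at this
            linarith
        _ ≤ ‖z i‖ * ‖p i‖ := by rw [← norm_mul]; exact neg_le_abs _
        _ ≤ r * ‖p‖ := by gcongr <;> exact norm_le_pi_norm _ i
    refine max_le ?_ (by positivity)
    calc (r⁻¹ • z) i * (A *ᵥ (r⁻¹ • z)) i = z i * (A *ᵥ z) i / r ^ 2 := by
          rw [mulVec_smul]; simp only [Pi.smul_apply, smul_eq_mul]; field_simp
      _ ≤ r * ‖p‖ / r ^ 2 := by gcongr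
      _ = ‖p‖ / r := by field_simp
  have hm_le : m ≤ Fintype.card n * (‖p‖ / r) := by
    simpa using (hmg _ hu).trans (Finset.sum_le_sum fun i _ => hterm i)
  rw [div_mul_eq_mul_div, le_div_iff₀ hm]
  rw [mul_div_assoc', le_div_iff₀ hr] at hm_le
  linarith

end IsPMatrix

section LCP

variable {n : ℕ} {A : Matrix (Fin n) (Fin n) ℝ} {q x : Fin n → ℝ}

theorem isLCPSol_iff :
    IsLCPSol A q x ↔ ∀ i, 0 ≤ x i ∧ 0 ≤ (A *ᵥ x + q) i ∧ x i * (A *ᵥ x + q) i = 0 := by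
  refine ⟨fun ⟨hx, hw, hxw⟩ i => ⟨hx i, hw i, ?_⟩, fun h => ⟨fun i => (h i).1, fun i => (h i).2.1,
    Finset.sum_eq_zero fun i _ => (h i).2.2⟩⟩
  exact (Finset.sum_eq_zero_iff_of_nonneg fun j _ => mul_nonneg (hx j) (hw j)).1 hxw i
    (Finset.mem_univ i)

theorem IsPMatrix.exists_norm_sub_le (hA : IsPMatrix A) :
    ∃ c : ℝ, ∀ q q' x y : Fin n → ℝ, IsLCPSol A q x → IsLCPSol A q' y →
      ‖x - y‖ ≤ c * ‖q - q'‖ := by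
  obtain ⟨c, hc⟩ := hA.exists_norm_le_mul_norm
  refine ⟨c, fun q q' x y hx hy => hc _ _ fun i => ?_⟩
  have hw : A *ᵥ (x - y) + (q - q') = (A *ᵥ x + q) - (A *ᵥ y + q') := by
    rw [mulVec_sub]; abel
  obtain ⟨hxi, hwxi, hcxi⟩ := isLCPSol_iff.1 hx i
  obtain ⟨hyi, hwyi, hcyi⟩ := isLCPSol_iff.1 hy i
  rw [hw, Pi.sub_apply, Pi.sub_apply]
  nlinarith [mul_nonneg hxi hwyi, mul_nonneg hyi hwxi]

theorem IsPMatrix.eq_of_isLCPSol (hA : IsPMatrix A) {y : Fin n → ℝ} (hx : IsLCPSol A q x)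
    (hy : IsLCPSol A q y) : x = y := by
  obtain ⟨c, hc⟩ := hA.exists_norm_sub_le
  simpa [sub_eq_zero] using hc q q x y hx hy

theorem IsPMatrix.continuous_of_isLCPSol (hA : IsPMatrix A) {sol : (Fin n → ℝ) → Fin n → ℝ}
    (hsol : ∀ q, IsLCPSol A q (sol q)) : Continuous sol := by
  obtain ⟨c, hc⟩ := hA.exists_norm_sub_le
  refine (LipschitzWith.of_dist_le' (K := c) fun q q' => ?_).continuous
  simpa [dist_eq_norm] using hc q q' _ _ (hsol q) (hsol q')

end LCP

section Snoc

variable {n : ℕ} (A : Matrix (Fin (n + 1)) (Fin (n + 1)) ℝ) (q : Fin (n + 1) → ℝ)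

theorem mulVec_snoc_add_apply_castSucc (y : Fin n → ℝ) (t : ℝ) (j : Fin n) :
    (A *ᵥ Fin.snoc y t + q) j.castSucc
      = (A.submatrix Fin.castSucc Fin.castSucc *ᵥ y + Fin.init (A *ᵥ Fin.snoc 0 t + q)) j := by
  simp [mulVec, dotProduct, Fin.sum_univ_castSucc, Fin.init]
  ring

variable {A q} {y : Fin n → ℝ} {t : ℝ}

theorem isLCPSol_snoc_iff
    (hy : IsLCPSol (A.submatrix Fin.castSucc Fin.castSucc) (Fin.init (A *ᵥ Fin.snoc 0 t + q)) y) :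
    IsLCPSol A q (Fin.snoc y t) ↔ 0 ≤ t ∧ 0 ≤ (A *ᵥ Fin.snoc y t + q) (Fin.last n) ∧
      t * (A *ᵥ Fin.snoc y t + q) (Fin.last n) = 0 := by
  rw [isLCPSol_iff, Fin.forall_fin_succ']
  simp only [Fin.snoc_castSucc, Fin.snoc_last, mulVec_snoc_add_apply_castSucc]
  exact and_iff_right (isLCPSol_iff.1 hy)

theorem snoc_mul_mulVec_snoc_add_nonpos
    (hy : IsLCPSol (A.submatrix Fin.castSucc Fin.castSucc) (Fin.init (A *ᵥ Fin.snoc 0 t + q)) y)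
    (ht : 0 ≤ t)
    (hlast : (A *ᵥ Fin.snoc y t + q) (Fin.last n) ≤ 0) (i : Fin (n + 1)) :
    (Fin.snoc y t : Fin (n + 1) → ℝ) i * (A *ᵥ Fin.snoc y t + q) i ≤ 0 := by
  induction i using Fin.lastCases with
  | last => rw [Fin.snoc_last]; exact mul_nonpos_of_nonneg_of_nonpos ht hlast
  | cast j =>
    rw [Fin.snoc_castSucc, mulVec_snoc_add_apply_castSucc]
    exact ((isLCPSol_iff.1 hy j).2.2).le

end Snoc

theorem IsPMatrix.exists_isLCPSol_of_continuous {n : ℕ} {A : Matrix (Fin (n + 1)) (Fin (n + 1)) ℝ}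
    (hA : IsPMatrix A) {sol : (Fin n → ℝ) → Fin n → ℝ}
    (hsol : ∀ p, IsLCPSol (A.submatrix Fin.castSucc Fin.castSucc) p (sol p))
    (hcont : Continuous sol) (q : Fin (n + 1) → ℝ) : ∃ x, IsLCPSol A q x := by
  let X : ℝ → Fin (n + 1) → ℝ := fun t => Fin.snoc (sol (Fin.init (A *ᵥ Fin.snoc 0 t + q))) t
  let φ : ℝ → ℝ := fun t => (A *ᵥ X t + q) (Fin.last n)
  have hφ : Continuous φ := by fun_prop
  obtain ⟨T, hT, hφT⟩ : ∃ T, 0 ≤ T ∧ 0 ≤ φ T := by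
    obtain ⟨c, hc⟩ := hA.exists_norm_le_mul_norm
    by_contra! hneg
    set T := max 0 (c * ‖q‖) + 1
    have hT : 0 ≤ T := by positivity
    have hXT : ‖X T‖ ≤ c * ‖q‖ :=
      hc _ _ (snoc_mul_mulVec_snoc_add_nonpos (hsol _) hT (hneg T hT).le)
    have hTX : T ≤ ‖X T‖ := by
      simpa [X, abs_of_nonneg hT] using norm_le_pi_norm (X T) (Fin.last n)
    linarith [le_max_right 0 (c * ‖q‖)]
  obtain ⟨t, ht, hφt, htφ⟩ : ∃ t, 0 ≤ t ∧ 0 ≤ φ t ∧ t * φ t = 0 := by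
    rcases le_or_gt 0 (φ 0) with h0 | h0
    · exact ⟨0, le_rfl, h0, zero_mul _⟩
    · obtain ⟨t, ht, hφt⟩ := intermediate_value_Icc hT hφ.continuousOn ⟨h0.le, hφT⟩
      exact ⟨t, ht.1, hφt.ge, by rw [hφt, mul_zero]⟩
  exact ⟨X t, (isLCPSol_snoc_iff (hsol _)).2 ⟨ht, hφt, htφ⟩⟩

theorem IsPMatrix.exists_isLCPSol {n : ℕ} {A : Matrix (Fin n) (Fin n) ℝ} (hA : IsPMatrix A)
    (q : Fin n → ℝ) : ∃ x, IsLCPSol A q x := by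
  induction n with
  | zero => exact ⟨0, by simp [IsLCPSol]⟩
  | succ n ih =>
    have hAb := hA.submatrix (Fin.castSucc_injective n)
    choose sol hsol using fun p => ih hAb p
    exact hA.exists_isLCPSol_of_continuous hsol (hAb.continuous_of_isLCPSol hsol) q

/-- A P-matrix (all principal minors positive) has a unique LCP solution for every `q`. -/
theorem stmt0 {n : ℕ} (A : Matrix (Fin n) (Fin n) ℝ)
    (hP : ∀ (r : ℕ) (f : Fin r → Fin n), StrictMono f → 0 < (A.submatrix f f).det) :
    ∀ q : Fin n → ℝ, ∃! x : Fin n → ℝ, IsLCPSol A q x := by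
  intro q
  have hA : IsPMatrix A := isPMatrix_of_strictMono hP
  obtain ⟨x, hx⟩ := hA.exists_isLCPSol q
  exact ⟨x, hx, fun y hy => hA.eq_of_isLCPSol hy hx⟩
end

section
/- Let A be an n×n real matrix such that for every q ∈ ℝⁿ the problem LCP(A,q) has a unique solution. Then every principal minor of A is positive. -/
open Matrix

lemma signProp_of_unique {n : ℕ} (A : Matrix (Fin n) (Fin n) ℝ)
    (h : ∀ q : Fin n → ℝ, ∃! x : Fin n → ℝ, IsLCPSol A q x) :
    ∀ z : Fin n → ℝ, (∀ i, z i * A.mulVec z i ≤ 0) → z = 0 := by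
  intro z hz
  set x : Fin n → ℝ := fun i => max (z i) 0 with hxdef
  set x' : Fin n → ℝ := fun i => max (-z i) 0 with hx'def
  have hxx' : ∀ i, x i - x' i = z i := by
    intro i; simp only [hxdef, hx'def, max_def]; split_ifs <;> linarith
  have hxz : x - x' = z := by funext i; simpa using hxx' i
  have hsub : A.mulVec x - A.mulVec x' = A.mulVec z := by
    rw [← Matrix.mulVec_sub, hxz]
  set q : Fin n → ℝ := fun i => -min ((A.mulVec x) i) ((A.mulVec x') i) with hqdef
  have hAz : ∀ i, (A.mulVec x) i - (A.mulVec x') i = (A.mulVec z) i := by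
    intro i; rw [← hsub]; rfl
  have hxpos : ∀ i, 0 < z i → (A.mulVec x) i ≤ (A.mulVec x') i := by
    intro i hi
    have h1 : (A.mulVec z) i ≤ 0 := by nlinarith [hz i]
    have := hAz i; linarith
  have hx'pos : ∀ i, z i < 0 → (A.mulVec x') i ≤ (A.mulVec x) i := by
    intro i hi
    have h1 : 0 ≤ (A.mulVec z) i := by nlinarith [hz i]
    have := hAz i; linarith
  have sol1 : IsLCPSol A q x := by
    refine ⟨fun i => le_max_right _ _, ?_, ?_⟩
    · intro i
      have := min_le_left ((A.mulVec x) i) ((A.mulVec x') i)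
      simp only [Pi.add_apply, hqdef]; linarith
    · apply Finset.sum_eq_zero
      intro i _
      rcases le_or_gt (z i) 0 with hle | hlt
      · have : x i = 0 := by simp [hxdef, max_eq_right hle]
        simp [this]
      · have hmin : min ((A.mulVec x) i) ((A.mulVec x') i) = (A.mulVec x) i :=
          min_eq_left (hxpos i hlt)
        simp [Pi.add_apply, hqdef, hmin]
  have sol2 : IsLCPSol A q x' := by
    refine ⟨fun i => le_max_right _ _, ?_, ?_⟩
    · intro i
      have := min_le_right ((A.mulVec x) i) ((A.mulVec x') i)
      simp only [Pi.add_apply, hqdef]; linarith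
    · apply Finset.sum_eq_zero
      intro i _
      rcases le_or_gt 0 (z i) with hle | hlt
      · have : x' i = 0 := by simp [hx'def, max_eq_right (neg_nonpos.mpr hle)]
        simp [this]
      · have hmin : min ((A.mulVec x) i) ((A.mulVec x') i) = (A.mulVec x') i :=
          min_eq_right (hx'pos i hlt)
        simp [Pi.add_apply, hqdef, hmin]
  have hxe : x = x' := (h q).unique sol1 sol2
  funext i
  have h2 := hxx' i
  rw [hxe, sub_self] at h2
  exact h2.symm

lemma signProp_submatrix {n r : ℕ} (A : Matrix (Fin n) (Fin n) ℝ)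
    (hs : ∀ z : Fin n → ℝ, (∀ i, z i * A.mulVec z i ≤ 0) → z = 0)
    (f : Fin r → Fin n) (hf : Function.Injective f) :
    ∀ z : Fin r → ℝ, (∀ j, z j * (A.submatrix f f).mulVec z j ≤ 0) → z = 0 := by
  intro z hz
  set w : Fin n → ℝ := Function.extend f z (fun _ => 0) with hwdef
  have hwf : ∀ j, w (f j) = z j := fun j => hf.extend_apply _ _ _
  have hw0 : ∀ i, (¬ ∃ j, f j = i) → w i = 0 := by
    intro i hi; exact Function.extend_apply' _ _ _ hi
  have hmv : ∀ j, (A.mulVec w) (f j) = ((A.submatrix f f).mulVec z) j := by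
    intro j
    show ∑ i, A (f j) i * w i = ∑ j', A (f j) (f j') * z j'
    have himg : ∑ i ∈ Finset.univ.image f, A (f j) i * w i
        = ∑ j' : Fin r, A (f j) (f j') * w (f j') :=
      Finset.sum_image (fun a _ b _ hab => hf hab)
    rw [← Finset.sum_subset (Finset.subset_univ (Finset.univ.image f))
        (by
          intro i _ hi
          have hni : ¬ ∃ j', f j' = i := by
            intro ⟨j', hj'⟩; exact hi (Finset.mem_image.mpr ⟨j', Finset.mem_univ _, hj'⟩)
          rw [hw0 i hni, mul_zero]), himg]
    simp [hwf]
  have hwz : w = 0 := by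
    apply hs
    intro i
    by_cases hi : ∃ j, f j = i
    · obtain ⟨j, rfl⟩ := hi
      rw [hwf j, hmv j]; exact hz j
    · rw [hw0 i hi, zero_mul]
  funext j
  have := congrFun hwz (f j)
  rwa [hwf j] at this

lemma det_pos_of_signProp {r : ℕ} (B : Matrix (Fin r) (Fin r) ℝ)
    (hs : ∀ z : Fin r → ℝ, (∀ i, z i * B.mulVec z i ≤ 0) → z = 0) :
    0 < B.det := by
  set g : ℝ → ℝ := fun t => (B + t • (1 : Matrix (Fin r) (Fin r) ℝ)).det with hgdef
  have hgcont : Continuous g := by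
    apply Continuous.matrix_det
    exact continuous_const.add (continuous_id.smul continuous_const)
  have hgne : ∀ t : ℝ, 0 ≤ t → g t ≠ 0 := by
    intro t ht h0
    obtain ⟨v, hv, hv0⟩ := (Matrix.exists_mulVec_eq_zero_iff).2 h0
    apply hv
    apply hs
    intro i
    have hp : (B.mulVec v) i + t * v i = 0 := by
      have h3 := congrFun hv0 i
      rw [Matrix.add_mulVec, Matrix.smul_mulVec, Matrix.one_mulVec] at h3
      simpa using h3
    have h4 : B.mulVec v i = -(t * v i) := by linarith
    rw [h4]
    nlinarith [sq_nonneg (v i)]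
  -- find T > 0 with g T > 0
  have hcont2 : Continuous fun ε : ℝ => ((ε • B + 1 : Matrix (Fin r) (Fin r) ℝ)).det := by
    apply Continuous.matrix_det
    exact (continuous_id.smul continuous_const).add continuous_const
  have htend : Filter.Tendsto (fun ε : ℝ => ((ε • B + 1 : Matrix (Fin r) (Fin r) ℝ)).det)
      (nhds 0) (nhds 1) := by
    have := hcont2.tendsto 0
    simpa using this
  have hev : ∀ᶠ ε : ℝ in nhds 0, 0 < ((ε • B + 1 : Matrix (Fin r) (Fin r) ℝ)).det :=
    htend.eventually (eventually_gt_nhds one_pos)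
  have hev2 : ∀ᶠ ε : ℝ in nhdsWithin 0 (Set.Ioi 0),
      0 < ((ε • B + 1 : Matrix (Fin r) (Fin r) ℝ)).det := nhdsWithin_le_nhds hev
  obtain ⟨ε, hdet, hεmem⟩ := (hev2.and eventually_mem_nhdsWithin).exists
  have hεpos : (0:ℝ) < ε := hεmem
  have hεne : (ε : ℝ) ≠ 0 := ne_of_gt hεpos
  have key : B + ε⁻¹ • (1 : Matrix (Fin r) (Fin r) ℝ) = ε⁻¹ • (ε • B + 1) := by
    rw [smul_add, smul_smul, inv_mul_cancel₀ hεne, one_smul]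
  have hgT : 0 < g ε⁻¹ := by
    show 0 < (B + ε⁻¹ • (1 : Matrix (Fin r) (Fin r) ℝ)).det
    rw [key, Matrix.det_smul]
    exact mul_pos (pow_pos (inv_pos.mpr hεpos) _) hdet
  have hg0 : g 0 = B.det := by simp [hgdef]
  rcases lt_or_gt_of_ne (hgne 0 le_rfl) with hneg | hposg
  · exfalso
    have hTnn : (0:ℝ) ≤ ε⁻¹ := (inv_pos.mpr hεpos).le
    obtain ⟨c, hc, hc0⟩ :=
      intermediate_value_Icc hTnn hgcont.continuousOn ⟨hneg.le, hgT.le⟩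
    exact hgne c hc.1 hc0
  · rw [hg0] at hposg; exact hposg

/-- If LCP(A,q) has a unique solution for every `q`, then every principal minor of `A`
is positive. -/
theorem stmt1 {n : ℕ} (A : Matrix (Fin n) (Fin n) ℝ)
    (h : ∀ q : Fin n → ℝ, ∃! x : Fin n → ℝ, IsLCPSol A q x) :
    ∀ (r : ℕ) (f : Fin r → Fin n), StrictMono f → 0 < (A.submatrix f f).det := by
  intro r f hf
  exact det_pos_of_signProp _ (signProp_submatrix A (signProp_of_unique A h) f hf.injective)
end

section
/- Let A be an r×r real matrix with all entries positive, and suppose x ∈ ℝʳ has all coordinates nonzero with alternating signs and satisfies xᵢ(Ax)ᵢ ≤ 0 for all i. Write x⁺ and x⁻ for the positive and negative parts of x, and v⁺, v⁻ for those of v := Ax. Then q := v⁺ − A x⁺ equals v⁻ − A x⁻, q < 0 coordinatewise, and both x⁺ and x⁻ are solutions of LCP(A,q). -/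
open Matrix

/-- The positive part of a vector: `w⁺ = (|w| + w)/2`. -/
noncomputable def vPos {n : ℕ} (w : Fin n → ℝ) : Fin n → ℝ := fun i => (|w i| + w i) / 2

/-- The negative part of a vector: `w⁻ = (|w| - w)/2`. -/
noncomputable def vNeg {n : ℕ} (w : Fin n → ℝ) : Fin n → ℝ := fun i => (|w i| - w i) / 2

/-- If `A` has positive entries and `x` is an alternating-sign vector whose sign is reversed
(non-strictly) by `A`, then `q := v⁺ - A x⁺ = v⁻ - A x⁻` (with `v = Ax`) satisfies `q < 0`,
and both `x⁺` and `x⁻` solve LCP(A,q). -/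
theorem stmt2 {r : ℕ} (A : Matrix (Fin r) (Fin r) ℝ) (hA : ∀ i j, 0 < A i j)
    (x : Fin r → ℝ) (hx0 : ∀ i, x i ≠ 0)
    (halt : ∀ i : ℕ, ∀ h : i + 1 < r, x ⟨i, by omega⟩ * x ⟨i + 1, h⟩ < 0)
    (hrev : ∀ i, x i * (A.mulVec x) i ≤ 0) :
    (vPos (A.mulVec x) - A.mulVec (vPos x)
        = vNeg (A.mulVec x) - A.mulVec (vNeg x))
    ∧ (∀ i, (vPos (A.mulVec x) - A.mulVec (vPos x)) i < 0)
    ∧ IsLCPSol A (vPos (A.mulVec x) - A.mulVec (vPos x)) (vPos x)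
    ∧ IsLCPSol A (vPos (A.mulVec x) - A.mulVec (vPos x)) (vNeg x) := by
  set v := A.mulVec x with hv
  have hsign : ∀ i, (0 < x i ∧ v i ≤ 0) ∨ (x i < 0 ∧ 0 ≤ v i) := by
    intro i
    rcases lt_or_gt_of_ne (hx0 i) with h | h
    · right; exact ⟨h, by nlinarith [hrev i]⟩
    · left; exact ⟨h, by nlinarith [hrev i]⟩
  have hex : ∀ _ : Fin r, (∃ i, 0 < x i) ∧ (∃ i, x i < 0) := by
    intro j
    have hr1 : 0 < r := j.pos
    by_cases h2 : 2 ≤ r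
    · have h01 := halt 0 (by omega)
      rcases lt_or_gt_of_ne (hx0 ⟨0, by omega⟩) with h | h
      · exact ⟨⟨⟨1, by omega⟩, by nlinarith⟩, ⟨⟨0, by omega⟩, h⟩⟩
      · exact ⟨⟨⟨0, by omega⟩, h⟩, ⟨⟨1, by omega⟩, by nlinarith⟩⟩
    · exfalso
      have hr : r = 1 := by omega
      subst hr
      have hvj : v j = A j j * x j := by
        rw [hv]
        simp [Matrix.mulVec, dotProduct, Fin.sum_univ_one, Subsingleton.elim j 0]
      have h := hrev j
      rw [hvj] at h
      nlinarith [hA j j, mul_self_pos.mpr (hx0 j)]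
  -- pointwise facts about vPos/vNeg
  have hPnn : ∀ (w : Fin r → ℝ) i, 0 ≤ vPos w i := fun w i => by
    have := neg_abs_le (w i); simp only [vPos]; linarith
  have hNnn : ∀ (w : Fin r → ℝ) i, 0 ≤ vNeg w i := fun w i => by
    have := le_abs_self (w i); simp only [vNeg]; linarith
  have hPpos : ∀ (w : Fin r → ℝ) i, 0 < w i → 0 < vPos w i := fun w i h => by
    simp only [vPos]; rw [abs_of_pos h]; linarith
  have hNpos : ∀ (w : Fin r → ℝ) i, w i < 0 → 0 < vNeg w i := fun w i h => by
    simp only [vNeg]; rw [abs_of_neg h]; linarith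
  have hPzero : ∀ (w : Fin r → ℝ) i, w i ≤ 0 → vPos w i = 0 := fun w i h => by
    simp only [vPos]; rw [abs_of_nonpos h]; ring
  have hNzero : ∀ (w : Fin r → ℝ) i, 0 ≤ w i → vNeg w i = 0 := fun w i h => by
    simp only [vNeg]; rw [abs_of_nonneg h]; ring
  -- positivity of A x⁺ and A x⁻ at each coordinate
  have hApos : ∀ j, 0 < A.mulVec (vPos x) j := by
    intro j
    obtain ⟨⟨i, hi⟩, -⟩ := hex j
    simp only [Matrix.mulVec, dotProduct]
    apply Finset.sum_pos'
    · intro k _; exact mul_nonneg (hA j k).le (hPnn x k)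
    · exact ⟨i, Finset.mem_univ i, mul_pos (hA j i) (hPpos x i hi)⟩
  have hAneg : ∀ j, 0 < A.mulVec (vNeg x) j := by
    intro j
    obtain ⟨-, ⟨i, hi⟩⟩ := hex j
    simp only [Matrix.mulVec, dotProduct]
    apply Finset.sum_pos'
    · intro k _; exact mul_nonneg (hA j k).le (hNnn x k)
    · exact ⟨i, Finset.mem_univ i, mul_pos (hA j i) (hNpos x i hi)⟩
  -- the key equality
  have hxsplit : vPos x - vNeg x = x := by
    funext i; simp [vPos, vNeg]; ring
  have heq : vPos v - A.mulVec (vPos x) = vNeg v - A.mulVec (vNeg x) := by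
    have hAv : A.mulVec (vPos x) - A.mulVec (vNeg x) = v := by
      rw [← Matrix.mulVec_sub, hxsplit, hv]
    funext i
    have h1 := congrFun hAv i
    simp only [Pi.sub_apply, vPos, vNeg] at h1 ⊢
    linarith
  -- q < 0
  have hqneg : ∀ i, (vPos v - A.mulVec (vPos x)) i < 0 := by
    intro i
    rcases hsign i with ⟨hx, hvle⟩ | ⟨hx, hvge⟩
    · simp only [Pi.sub_apply, hPzero v i hvle]
      linarith [hApos i]
    · rw [heq]
      simp only [Pi.sub_apply, hNzero v i hvge]
      linarith [hAneg i]
  refine ⟨heq, hqneg, ?_, ?_⟩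
  · refine ⟨hPnn x, ?_, ?_⟩
    · intro i
      have : (A.mulVec (vPos x) + (vPos v - A.mulVec (vPos x))) i = vPos v i := by
        simp
      rw [this]; exact hPnn v i
    · have hvv : A.mulVec (vPos x) + (vPos v - A.mulVec (vPos x)) = vPos v := by
        funext i; simp
      rw [hvv, dotProduct]
      apply Finset.sum_eq_zero
      intro i _
      rcases hsign i with ⟨hx, hvle⟩ | ⟨hx, hvge⟩
      · rw [hPzero v i hvle]; ring
      · rw [hPzero x i hx.le]; ring
  · refine ⟨hNnn x, ?_, ?_⟩
    · intro i
      have : (A.mulVec (vNeg x) + (vPos v - A.mulVec (vPos x))) i = vNeg v i := by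
        rw [heq]; simp
      rw [this]; exact hNnn v i
    · have hvv : A.mulVec (vNeg x) + (vPos v - A.mulVec (vPos x)) = vNeg v := by
        rw [heq]; funext i; simp
      rw [hvv, dotProduct]
      apply Finset.sum_eq_zero
      intro i _
      rcases hsign i with ⟨hx, hvle⟩ | ⟨hx, hvge⟩
      · rw [hNzero x i hx.le]; ring
      · rw [hNzero v i hvge]; ring
end

section
/- Let A be an r×r real matrix (r ≥ 2) all of whose proper minors are positive. Define x := (A¹¹, 0, A¹³, 0, ...)ᵀ where A^{1j} is the (1,j) minor (determinant of A with row 1 and column j deleted), and q := −Ax. If A is singular, then z := (0, A¹², 0, A¹⁴, ...)ᵀ is a solution of LCP(A,q) distinct from x, and both are solutions. -/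
open Matrix

/-- `A^{1j}` : the determinant of `A` with its first row and `j`-th column deleted. -/
noncomputable def firstRowMinor {n : ℕ} (A : Matrix (Fin (n + 1)) (Fin (n + 1)) ℝ)
    (j : Fin (n + 1)) : ℝ :=
  (A.submatrix Fin.succ j.succAbove).det

/-- The vector `(A¹¹, 0, A¹³, 0, …)`. -/
noncomputable def altEvenVec {n : ℕ} (A : Matrix (Fin (n + 1)) (Fin (n + 1)) ℝ) :
    Fin (n + 1) → ℝ :=
  fun j => if Even (j : ℕ) then firstRowMinor A j else 0

/-- The vector `(0, A¹², 0, A¹⁴, …)`. -/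
noncomputable def altOddVec {n : ℕ} (A : Matrix (Fin (n + 1)) (Fin (n + 1)) ℝ) :
    Fin (n + 1) → ℝ :=
  fun j => if Odd (j : ℕ) then firstRowMinor A j else 0

lemma stmt4_mulVec_eq {n : ℕ} (A : Matrix (Fin (n + 1)) (Fin (n + 1)) ℝ) (hsing : A.det = 0) :
    A.mulVec (altEvenVec A) = A.mulVec (altOddVec A) := by
  funext i
  have h0 : (A.updateRow 0 (A i)).det = 0 := by
    rcases eq_or_ne i 0 with rfl | hi
    · rwa [updateRow_eq_self]
    · exact det_zero_of_row_eq hi.symm (by rw [updateRow_self, updateRow_ne hi])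
  rw [det_succ_row_zero] at h0
  have hsub : ∀ j : Fin (n+1), ((A.updateRow 0 (A i)).submatrix Fin.succ j.succAbove)
      = A.submatrix Fin.succ j.succAbove := by
    intro j; ext a b; simp [updateRow_ne (Fin.succ_ne_zero a)]
  simp only [hsub, updateRow_self] at h0
  simp only [mulVec, dotProduct, altEvenVec, altOddVec]
  have : ∀ j : Fin (n+1), A i j * (if Even (j:ℕ) then firstRowMinor A j else 0)
      - A i j * (if Odd (j:ℕ) then firstRowMinor A j else 0)
      = (-1 : ℝ)^(j:ℕ) * A i j * firstRowMinor A j := by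
    intro j
    rcases Nat.even_or_odd (j:ℕ) with h | h
    · simp [h, Nat.not_odd_iff_even.2 h, h.neg_one_pow]
    · simp only [h, Nat.not_even_iff_odd.2 h, h.neg_one_pow, if_true, if_false]; ring
  have hsum : ∑ j, (A i j * (if Even (j:ℕ) then firstRowMinor A j else 0)
      - A i j * (if Odd (j:ℕ) then firstRowMinor A j else 0)) = 0 := by
    rw [Finset.sum_congr rfl (fun j _ => this j)]; exact h0
  rw [Finset.sum_sub_distrib, sub_eq_zero] at hsum
  exact hsum

/-- If `A` is `r×r` (`r ≥ 2`) with all proper minors positive and `A` is singular, then with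
`x = (A¹¹,0,A¹³,0,…)`, `z = (0,A¹²,0,A¹⁴,…)` and `q = -Ax`, the vector `z` is a solution of
LCP(A,q) distinct from `x`, and both are solutions. -/
theorem stmt4 {n : ℕ} (A : Matrix (Fin (n + 2)) (Fin (n + 2)) ℝ)
    (hproper : ∀ p : ℕ, p < n + 2 → ∀ (f g : Fin p → Fin (n + 2)),
      StrictMono f → StrictMono g → 0 < (A.submatrix f g).det)
    (hsing : A.det = 0) :
    altOddVec A ≠ altEvenVec A
    ∧ IsLCPSol A (-(A.mulVec (altEvenVec A))) (altEvenVec A)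
    ∧ IsLCPSol A (-(A.mulVec (altEvenVec A))) (altOddVec A) := by
  have hpos : ∀ j : Fin (n + 2), 0 < firstRowMinor A j := fun j =>
    hproper (n + 1) (by omega) Fin.succ j.succAbove Fin.strictMono_succ
      (Fin.strictMono_succAbove j)
  have hkey := stmt4_mulVec_eq A hsing
  have hAx : A.mulVec (altEvenVec A) + -(A.mulVec (altEvenVec A)) = 0 := by
    simp
  have hAz : A.mulVec (altOddVec A) + -(A.mulVec (altEvenVec A)) = 0 := by
    rw [← hkey]; simp
  refine ⟨?_, ⟨?_, ?_, ?_⟩, ⟨?_, ?_, ?_⟩⟩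
  · intro h
    have h1 := congrFun h (1 : Fin (n + 2))
    have hv : ((1 : Fin (n + 2)) : ℕ) = 1 := rfl
    simp only [altOddVec, altEvenVec, hv] at h1
    norm_num at h1
    exact absurd h1 (hpos 1).ne'
  · intro i
    simp only [altEvenVec]
    split
    · exact (hpos i).le
    · exact le_refl 0
  · intro i; rw [hAx]; exact le_refl 0
  · rw [hAx]; simp
  · intro i
    simp only [altOddVec]
    split
    · exact (hpos i).le
    · exact le_refl 0
  · intro i; rw [hAz]; exact le_refl 0
  · rw [hAz]; simp
end

section
/- Let A be an r×r real matrix (r ≥ 2) all of whose proper minors are positive and with det A < 0. With x := (A¹¹, 0, A¹³, 0, ...)ᵀ, z := (0, A¹², 0, A¹⁴, ...)ᵀ, and q := −Ax, both x and z are solutions of LCP(A,q); in particular LCP(A,q) has at least two solutions. -/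
open Matrix

lemma adj_eq_minor {n : ℕ} (A : Matrix (Fin (n + 1)) (Fin (n + 1)) ℝ) (j : Fin (n + 1)) :
    A.adjugate j 0 = (-1 : ℝ) ^ (j : ℕ) * firstRowMinor A j := by
  rw [Matrix.adjugate_apply, Matrix.det_succ_row_zero]
  rw [Finset.sum_eq_single j]
  · have h1 : (A.updateRow 0 (Pi.single j 1)) 0 j = 1 := by simp
    have h2 : (A.updateRow 0 (Pi.single j 1)).submatrix Fin.succ j.succAbove
        = A.submatrix Fin.succ j.succAbove := by
      ext a b
      simp [Matrix.submatrix_apply, Matrix.updateRow_ne (Fin.succ_ne_zero a)]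
    rw [h1, h2, firstRowMinor, mul_one]
  · intro k _ hk
    have : (A.updateRow 0 (Pi.single j 1)) 0 k = 0 := by
      simp [Pi.single_eq_of_ne hk]
    rw [this]; ring
  · simp

/-- If `A` is `r×r` (`r ≥ 2`) with all proper minors positive and `det A < 0`, then with
`x = (A¹¹,0,A¹³,0,…)`, `z = (0,A¹²,0,A¹⁴,…)` and `q = -Ax`, both `x` and `z` are solutions of
LCP(A,q); in particular LCP(A,q) has at least two solutions. -/
theorem stmt5 {n : ℕ} (A : Matrix (Fin (n + 2)) (Fin (n + 2)) ℝ)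
    (hproper : ∀ p : ℕ, p < n + 2 → ∀ (f g : Fin p → Fin (n + 2)),
      StrictMono f → StrictMono g → 0 < (A.submatrix f g).det)
    (hdet : A.det < 0) :
    IsLCPSol A (-(A.mulVec (altEvenVec A))) (altEvenVec A)
    ∧ IsLCPSol A (-(A.mulVec (altEvenVec A))) (altOddVec A)
    ∧ altEvenVec A ≠ altOddVec A := by
  have hminor : ∀ j, 0 < firstRowMinor A j := fun j =>
    hproper (n + 1) (by omega) Fin.succ j.succAbove Fin.strictMono_succ
      (Fin.strictMono_succAbove j)
  -- key: x - z = fun j => adjugate A j 0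
  have hsub : ∀ j, altEvenVec A j - altOddVec A j = A.adjugate j 0 := by
    intro j
    rw [adj_eq_minor]
    rcases Nat.even_or_odd (j : ℕ) with h | h
    · simp [altEvenVec, altOddVec, h, Nat.not_odd_iff_even.mpr h, Even.neg_one_pow h]
    · simp [altEvenVec, altOddVec, h, Nat.not_even_iff_odd.mpr h, Odd.neg_one_pow h]
  have hmv : ∀ i, A.mulVec (fun j => A.adjugate j 0) i = if i = 0 then A.det else 0 := by
    intro i
    have := congrFun (congrFun (Matrix.mul_adjugate A) i) 0
    simp only [Matrix.mul_apply, Matrix.smul_apply, Matrix.one_apply, smul_ite, smul_eq_mul,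
      mul_one, mul_zero, smul_zero] at this
    simpa [Matrix.mulVec, dotProduct] using this
  -- A z + q componentwise
  have hAzq : ∀ i, (A.mulVec (altOddVec A) + -(A.mulVec (altEvenVec A))) i
      = if i = 0 then -A.det else 0 := by
    intro i
    have : (A.mulVec (altOddVec A) + -(A.mulVec (altEvenVec A))) i
        = - A.mulVec (fun j => A.adjugate j 0) i := by
      simp only [Pi.add_apply, Pi.neg_apply, Matrix.mulVec, dotProduct,
        ← Finset.sum_neg_distrib, ← Finset.sum_add_distrib]
      congr 1; ext j
      rw [← hsub j]; ring
    rw [this, hmv]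
    split <;> simp
  refine ⟨⟨fun i => ?_, fun i => by simp, by simp⟩,
    ⟨fun i => ?_, fun i => ?_, ?_⟩, ?_⟩
  · unfold altEvenVec; split
    · exact (hminor i).le
    · exact le_refl 0
  · unfold altOddVec; split
    · exact (hminor i).le
    · exact le_refl 0
  · rw [hAzq i]; split
    · linarith
    · exact le_refl 0
  · rw [dotProduct]
    apply Finset.sum_eq_zero
    intro i _
    rcases eq_or_ne i 0 with rfl | hi
    · have : altOddVec A 0 = 0 := by simp [altOddVec]
      rw [this, zero_mul]
    · rw [hAzq i, if_neg hi, mul_zero]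
  · intro h
    have h0 := congrFun h 0
    simp [altEvenVec, altOddVec] at h0
    exact (hminor 0).ne' h0
end

section
/- Let m, n ≥ k ≥ 1 and let A be an m×n real matrix. Suppose that for every r ∈ [k] and every contiguous r×r submatrix A_r of A, the vector x^{A_r} := (A_r¹¹, −A_r¹², ..., (−1)^{r−1} A_r^{1r})ᵀ satisfies the sign non-reversal property: there exists i with x^{A_r}_i (A_r x^{A_r})_i > 0. Then A is totally positive of order k (all minors of size at most k are positive). -/
open Matrix

/-- `A` is totally positive of order `k`: all minors of size at most `k` are positive. -/
def TotallyPositiveOfOrder {m n : ℕ} (A : Matrix (Fin m) (Fin n) ℝ) (k : ℕ) : Prop :=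
  ∀ r : ℕ, r ≤ k → ∀ (f : Fin r → Fin m) (g : Fin r → Fin n),
    StrictMono f → StrictMono g → 0 < (A.submatrix f g).det

/-- The contiguous `(s+1)×(s+1)` submatrix of `A` with rows `a,…,a+s` and columns `b,…,b+s`. -/
def contSub {m n : ℕ} (A : Matrix (Fin m) (Fin n) ℝ) (a b s : ℕ)
    (ha : a + (s + 1) ≤ m) (hb : b + (s + 1) ≤ n) :
    Matrix (Fin (s + 1)) (Fin (s + 1)) ℝ :=
  fun i j => A ⟨a + i, by have := i.isLt; omega⟩ ⟨b + j, by have := j.isLt; omega⟩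

/-- The vector `(B¹¹, -B¹², …, (-1)^s B^{1,s+1})` of signed first-row minors of `B`. -/
noncomputable def signAltMinorVec {s : ℕ} (B : Matrix (Fin (s + 1)) (Fin (s + 1)) ℝ) :
    Fin (s + 1) → ℝ :=
  fun j => (-1 : ℝ) ^ (j : ℕ) * (B.submatrix Fin.succ j.succAbove).det

/-!
Since `B *ᵥ x^B = (det B) • e₀` (it is the first column of `B * adjugate B`), sign
non-reversal of `x^B` can only happen at the first coordinate, so `x^B₀ * det B > 0`, and
`x^B₀` is the determinant of the lower-right block of `B`, again a contiguous minor. Induction on the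
size makes every contiguous minor of order at most `k` positive.

Fekete's theorem then gives total positivity. If the columns `g` of a minor have a gap,
insert a column `c` into it; for the resulting `(s+1) × (s+2)` matrix the three-term
Plücker relation `D * E_c = E_last * F + E_first * G` expresses the minor `E_c` through two
minors of smaller column span and minors of order `s`, all positive by induction. With
contiguous columns, the same argument applied to the transposed column block closes the
gaps in the rows.
-/

theorem Fin.val_eq_val_zero_add_of_forall_val_succ_le {s M : ℕ} {g : Fin (s + 1) → Fin M}
    (hg : StrictMono g) (h : ∀ t : Fin s, (g t.succ : ℕ) ≤ g t.castSucc + 1) (j : Fin (s + 1)) :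
    (g j : ℕ) = g 0 + j := by
  induction j using Fin.induction with
  | zero => simp
  | succ t ih =>
    have hlt : (g t.castSucc : ℕ) < g t.succ := hg t.castSucc_lt_succ
    have := h t
    simp only [Fin.val_succ, Fin.val_castSucc] at ih ⊢
    omega

theorem Fin.exists_eq_castLE_comp_natAdd {s M : ℕ} {g : Fin (s + 1) → Fin M}
    (hg : StrictMono g) (h : ∀ t : Fin s, (g t.succ : ℕ) ≤ g t.castSucc + 1) :
    ∃ (b : ℕ) (hb : b + (s + 1) ≤ M), g = Fin.castLE hb ∘ Fin.natAdd b := by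
  have hval := Fin.val_eq_val_zero_add_of_forall_val_succ_le hg h
  have hlast := hval (Fin.last s)
  refine ⟨g 0, by have := (g (Fin.last s)).isLt; simp only [Fin.val_last] at hlast; omega, ?_⟩
  funext j
  exact Fin.ext (hval j)

namespace Matrix

section CommRing

variable {R : Type*} [CommRing R]

def altMaxMinors {q : ℕ} (W : Matrix (Fin q) (Fin (q + 1)) R) : Fin (q + 1) → R :=
  fun j => (-1) ^ (j : ℕ) * (W.submatrix id j.succAbove).det

theorem mulVec_altMaxMinors {q : ℕ} (W : Matrix (Fin q) (Fin (q + 1)) R) :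
    W *ᵥ altMaxMinors W = 0 := by
  ext i
  -- Expand along its first row the square matrix `W` with a second copy of row `i` on top.
  have hdup : (Matrix.of (Fin.cons (W i) W)).det = 0 :=
    det_zero_of_row_eq (Fin.succ_ne_zero i).symm rfl
  rw [det_succ_row_zero] at hdup
  change ∑ j, W i j * altMaxMinors W j = 0
  rw [← hdup]
  refine Finset.sum_congr rfl fun j _ => ?_
  change W i j * ((-1) ^ (j : ℕ) * _) =
    (-1) ^ (j : ℕ) * W i j * (W.submatrix id j.succAbove).det
  ring

theorem mulVec_cons_zero {p q : ℕ} (W : Matrix (Fin p) (Fin (q + 1)) R) (u : Fin q → R) :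
    W *ᵥ Fin.cons 0 u = W.submatrix id Fin.succ *ᵥ u := by
  ext i
  simp [mulVec, dotProduct, Fin.sum_univ_succ]

theorem mulVec_snoc_zero {p q : ℕ} (W : Matrix (Fin p) (Fin (q + 1)) R) (u : Fin q → R) :
    W *ᵥ Fin.snoc u 0 = W.submatrix id Fin.castSucc *ᵥ u := by
  ext i
  simp [mulVec, dotProduct, Fin.sum_univ_castSucc]

variable [IsDomain R]

theorem eq_zero_of_mulVec_eq_zero_of_interior_det_ne_zero {p : ℕ}
    (W : Matrix (Fin p) (Fin (p + 2)) R) (hW : (W.submatrix id (Fin.succ ∘ Fin.castSucc)).det ≠ 0)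
    {w : Fin (p + 2) → R} (hw : W *ᵥ w = 0) (h₀ : w 0 = 0) (hₗ : w (Fin.last _) = 0) :
    w = 0 := by
  have hsplit : w = Fin.cons 0 (Fin.snoc (Fin.init (Fin.tail w)) 0) := by
    conv_lhs => rw [← Fin.cons_self_tail w, ← Fin.snoc_init_self (Fin.tail w)]
    rw [h₀, Fin.tail, Fin.succ_last, hₗ]
  have hinterior : Fin.init (Fin.tail w) = 0 := by
    refine eq_zero_of_mulVec_eq_zero hW ?_
    rwa [hsplit, mulVec_cons_zero, mulVec_snoc_zero] at hw
  rw [hsplit, hinterior]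
  ext j
  refine Fin.cases rfl (fun j => Fin.lastCases ?_ (fun j => ?_) j) j <;> simp

theorem det_mul_det_submatrix_succAbove_eq_add {s : ℕ} (M : Matrix (Fin (s + 1)) (Fin (s + 2)) R)
    (hD : (M.submatrix Fin.castSucc (Fin.succ ∘ Fin.castSucc)).det ≠ 0) (t : Fin s) :
    (M.submatrix Fin.castSucc (Fin.succ ∘ Fin.castSucc)).det *
        (M.submatrix id t.castSucc.succ.succAbove).det =
      (M.submatrix id (Fin.last (s + 1)).succAbove).det *
          (M.submatrix Fin.castSucc (Fin.succ ∘ t.castSucc.succAbove)).det +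
        (M.submatrix id (Fin.succAbove 0)).det *
          (M.submatrix Fin.castSucc (Fin.castSucc ∘ t.succ.succAbove)).det := by
  set M' := M.submatrix Fin.castSucc id
  set D := (M.submatrix Fin.castSucc (Fin.succ ∘ Fin.castSucc)).det
  set E : Fin (s + 2) → R := fun j => (M.submatrix id j.succAbove).det
  set y₀ : Fin (s + 2) → R := Fin.cons 0 (altMaxMinors (M'.submatrix id Fin.succ))
  set yₗ : Fin (s + 2) → R := Fin.snoc (altMaxMinors (M'.submatrix id Fin.castSucc)) 0
  -- `w` lies in the kernel of `M'` and vanishes at both ends; as `M'` restricted to the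
  -- interior columns is invertible, `w = 0`, and its coordinate `t + 1` is the identity.
  set w := D • altMaxMinors M + E (Fin.last _) • y₀ - E 0 • yₗ
  have hw : M' *ᵥ w = 0 := by
    have hM : M' *ᵥ altMaxMinors M = 0 :=
      funext fun i => congrFun (mulVec_altMaxMinors M) i.castSucc
    simp only [w, y₀, yₗ, mulVec_sub, mulVec_add, mulVec_smul, hM, mulVec_cons_zero,
      mulVec_snoc_zero, mulVec_altMaxMinors, smul_zero, sub_zero, add_zero]
  have hw₀ : w 0 = 0 := by
    have hcomm : Fin.castSucc ∘ Fin.succ = (Fin.succ ∘ Fin.castSucc : Fin s → _) :=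
      funext fun j => (Fin.succ_castSucc j).symm
    simp only [w, D, E, y₀, M', yₗ, altMaxMinors, Fin.succAbove_last, submatrix_submatrix,
      CompTriple.comp_eq, Fin.succAbove_zero, Pi.sub_apply, Pi.add_apply, Pi.smul_apply,
      Fin.coe_ofNat_eq_mod, Nat.zero_mod, pow_zero, one_mul, smul_eq_mul, Fin.cons_zero,
      mul_zero, add_zero, Fin.snoc_apply_zero, hcomm]
    ring
  have hwₗ : w (Fin.last _) = 0 := by
    simp only [w, D, E, y₀, M', yₗ, altMaxMinors, Fin.succAbove_last, submatrix_submatrix,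
      CompTriple.comp_eq, Fin.succAbove_zero, Pi.sub_apply, Pi.add_apply, Pi.smul_apply,
      Fin.val_last, pow_succ, mul_neg, mul_one, neg_mul, smul_eq_mul, Fin.cons_last,
      Fin.snoc_last, mul_zero, sub_zero]
    ring
  have hwt : D * altMaxMinors M t.castSucc.succ + E (Fin.last _) * y₀ t.castSucc.succ
      - E 0 * yₗ t.castSucc.succ = 0 :=
    congrFun (eq_zero_of_mulVec_eq_zero_of_interior_det_ne_zero M' hD hw hw₀ hwₗ) _
  have hy₀ : y₀ t.castSucc.succ =
      (-1) ^ (t : ℕ) * (M.submatrix Fin.castSucc (Fin.succ ∘ t.castSucc.succAbove)).det := rfl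
  have hyₗ : yₗ t.castSucc.succ = (-1) ^ ((t : ℕ) + 1) *
      (M.submatrix Fin.castSucc (Fin.castSucc ∘ t.succ.succAbove)).det := by
    simp only [yₗ, Fin.succ_castSucc, Fin.snoc_castSucc]
    rfl
  have hv : altMaxMinors M t.castSucc.succ = (-1) ^ ((t : ℕ) + 1) * E t.castSucc.succ := rfl
  rw [hv, hy₀, hyₗ] at hwt
  have hσ : (-1 : R) ^ (t : ℕ) ≠ 0 := pow_ne_zero _ (neg_ne_zero.2 one_ne_zero)
  refine sub_eq_zero.1 ((mul_eq_zero.1 ?_).resolve_left hσ)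
  linear_combination -hwt

end CommRing

variable {K : Type*} [Field K] [LinearOrder K] [IsStrictOrderedRing K]

theorem det_submatrix_succAbove_pos {s : ℕ} (M : Matrix (Fin (s + 1)) (Fin (s + 2)) K)
    (hsmall : ∀ d : Fin s → Fin (s + 2), StrictMono d → 0 < (M.submatrix Fin.castSucc d).det)
    (h₀ : 0 < (M.submatrix id (Fin.succAbove 0)).det)
    (hₗ : 0 < (M.submatrix id (Fin.last (s + 1)).succAbove).det) (t : Fin s) :
    0 < (M.submatrix id t.castSucc.succ.succAbove).det := by
  have hD := hsmall _ (Fin.strictMono_succ.comp Fin.strictMono_castSucc)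
  refine pos_of_mul_pos_right ?_ hD.le
  rw [det_mul_det_submatrix_succAbove_eq_add M hD.ne' t]
  exact add_pos (mul_pos hₗ (hsmall _ (Fin.strictMono_succ.comp (Fin.strictMono_succAbove _))))
    (mul_pos h₀ (hsmall _ (Fin.strictMono_castSucc.comp (Fin.strictMono_succAbove _))))

theorem det_submatrix_pos_of_det_submatrix_natAdd_pos {m n s : ℕ} (A : Matrix (Fin m) (Fin n) K)
    (hsmall : ∀ (f : Fin s → Fin m) (g : Fin s → Fin n), StrictMono f → StrictMono g →
      0 < (A.submatrix f g).det)
    {f : Fin (s + 1) → Fin m} (hf : StrictMono f)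
    (hcont : ∀ (b : ℕ) (hb : b + (s + 1) ≤ n),
      0 < (A.submatrix f (Fin.castLE hb ∘ Fin.natAdd b)).det)
    {g : Fin (s + 1) → Fin n} (hg : StrictMono g) : 0 < (A.submatrix f g).det := by
  induction hL : (g (Fin.last s) : ℕ) - g 0 using Nat.strong_induction_on generalizing g with
  | _ L ih =>
    by_cases hgap : ∃ t : Fin s, (g t.castSucc : ℕ) + 1 < g t.succ
    · obtain ⟨t, ht⟩ := hgap
      -- Insert the column `g t + 1` into the gap: deleting it from `h` gives back `g`, while
      -- deleting the first or the last column of `h` gives column sets of smaller span.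
      set h : Fin (s + 2) → Fin n :=
        Fin.insertNth t.castSucc.succ ⟨g t.castSucc + 1, by omega⟩ g
      have hh : StrictMono h :=
        Fin.strictMono_insertNth hg t _ (by simp [Fin.lt_def]) (by simpa [Fin.lt_def] using ht)
      have hdel : h ∘ t.castSucc.succ.succAbove = g :=
        funext (Fin.insertNth_apply_succAbove _ _ _)
      have h₀ : h 0 = g 0 := by
        rw [← Fin.succAbove_ne_zero_zero (Fin.succ_ne_zero t.castSucc)]
        exact Fin.insertNth_apply_succAbove _ _ _ _
      have hₗ : h (Fin.last _) = g (Fin.last _) := by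
        rw [← Fin.succAbove_ne_last_last (a := t.castSucc.succ) ?_]
        · exact Fin.insertNth_apply_succAbove _ _ _ _
        · rw [Fin.succ_castSucc]
          exact (Fin.castSucc_lt_last _).ne
      have h₀₁ : (g 0 : ℕ) < h 1 := h₀ ▸ hh Fin.zero_lt_one
      have h₁ₗ : (h 1 : ℕ) ≤ g (Fin.last s) := hₗ ▸ hh.monotone (Fin.le_last _)
      have h₀ₗ : (g 0 : ℕ) ≤ h (Fin.last s).castSucc := h₀ ▸ hh.monotone (Fin.zero_le _)
      have hₗₗ : (h (Fin.last s).castSucc : ℕ) < g (Fin.last s) :=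
        hₗ ▸ hh (Fin.castSucc_lt_last _)
      have key := det_submatrix_succAbove_pos (A.submatrix f h)
        (fun d hd => hsmall _ _ (hf.comp Fin.strictMono_castSucc) (hh.comp hd)) ?_ ?_ t
      · rwa [submatrix_submatrix, Function.comp_id, hdel] at key
      · rw [submatrix_submatrix, Function.comp_id, Fin.succAbove_zero]
        refine ih _ ?_ (hh.comp Fin.strictMono_succ) rfl
        simp only [Function.comp_apply, Fin.succ_last, Fin.succ_zero_eq_one, hₗ]
        omega
      · rw [submatrix_submatrix, Function.comp_id, Fin.succAbove_last]
        refine ih _ ?_ (hh.comp Fin.strictMono_castSucc) rfl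
        simp only [Function.comp_apply, Fin.castSucc_zero, h₀]
        omega
    · simp only [not_exists, not_lt] at hgap
      obtain ⟨b, hb, rfl⟩ := Fin.exists_eq_castLE_comp_natAdd hg hgap
      exact hcont b hb

theorem det_submatrix_pos_of_det_submatrix_contiguous_pos {m n s : ℕ}
    (A : Matrix (Fin m) (Fin n) K)
    (hsmall : ∀ (f : Fin s → Fin m) (g : Fin s → Fin n), StrictMono f → StrictMono g →
      0 < (A.submatrix f g).det)
    (hcont : ∀ (a b : ℕ) (ha : a + (s + 1) ≤ m) (hb : b + (s + 1) ≤ n),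
      0 < (A.submatrix (Fin.castLE ha ∘ Fin.natAdd a) (Fin.castLE hb ∘ Fin.natAdd b)).det)
    {f : Fin (s + 1) → Fin m} {g : Fin (s + 1) → Fin n} (hf : StrictMono f)
    (hg : StrictMono g) : 0 < (A.submatrix f g).det := by
  refine det_submatrix_pos_of_det_submatrix_natAdd_pos A hsmall hf (fun b hb => ?_) hg
  -- Contiguous columns, arbitrary rows: the previous case for the transposed column block.
  set c := Fin.castLE hb ∘ Fin.natAdd b
  have hc : StrictMono c := (Fin.strictMono_castLE hb).comp (Fin.strictMono_natAdd b)
  have key := det_submatrix_pos_of_det_submatrix_natAdd_pos (A.submatrix id c)ᵀ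
    (fun f' g' hf' hg' => by rw [← det_transpose]; exact hsmall _ _ hg' (hc.comp hf'))
    strictMono_id (fun a ha => by rw [← det_transpose]; exact hcont a b ha hb) hf
  rwa [← det_transpose] at key

end Matrix

theorem totallyPositiveOfOrder_of_det_contSub_pos {m n k : ℕ} (A : Matrix (Fin m) (Fin n) ℝ)
    (h : ∀ s : ℕ, s + 1 ≤ k → ∀ (a b : ℕ) (ha : a + (s + 1) ≤ m) (hb : b + (s + 1) ≤ n),
      0 < (contSub A a b s ha hb).det) :
    TotallyPositiveOfOrder A k := by
  intro r
  induction r with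
  | zero => intro _ f g _ _; simp
  | succ s ih =>
    intro hr f g hf hg
    exact det_submatrix_pos_of_det_submatrix_contiguous_pos A
      (fun f g hf hg => ih (by omega) f g hf hg) (h s hr) hf hg

theorem signAltMinorVec_eq_adjugate {s : ℕ} (B : Matrix (Fin (s + 1)) (Fin (s + 1)) ℝ) :
    signAltMinorVec B = fun j => adjugate B j 0 := by
  funext j
  simp [signAltMinorVec, adjugate_fin_succ_eq_det_submatrix]

theorem mulVec_signAltMinorVec {s : ℕ} (B : Matrix (Fin (s + 1)) (Fin (s + 1)) ℝ) :
    B *ᵥ signAltMinorVec B = Pi.single 0 B.det := by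
  ext i
  rw [signAltMinorVec_eq_adjugate]
  change (B * adjugate B) i 0 = _
  rw [mul_adjugate]
  simp [Pi.single_apply, one_apply]

theorem det_pos_of_exists_signAltMinorVec_mul_mulVec_pos {s : ℕ}
    (B : Matrix (Fin (s + 1)) (Fin (s + 1)) ℝ) (h₀ : 0 < (B.submatrix Fin.succ Fin.succ).det)
    (h : ∃ i, 0 < signAltMinorVec B i * (B *ᵥ signAltMinorVec B) i) : 0 < B.det := by
  obtain ⟨i, hi⟩ := h
  rw [mulVec_signAltMinorVec] at hi
  rcases eq_or_ne i 0 with rfl | hi0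
  · have hx₀ : signAltMinorVec B 0 = (B.submatrix Fin.succ Fin.succ).det := by
      simp [signAltMinorVec]
    rw [Pi.single_eq_same, hx₀] at hi
    exact pos_of_mul_pos_right hi h₀.le
  · rw [Pi.single_eq_of_ne hi0, mul_zero] at hi
    exact absurd hi (lt_irrefl 0)

theorem contSub_submatrix_succ_succ {m n : ℕ} (A : Matrix (Fin m) (Fin n) ℝ) (a b s : ℕ)
    (ha : a + (s + 2) ≤ m) (hb : b + (s + 2) ≤ n) :
    (contSub A a b (s + 1) ha hb).submatrix Fin.succ Fin.succ =
      contSub A (a + 1) (b + 1) s (by omega) (by omega) := by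
  ext i j
  simp only [contSub, submatrix_apply, Fin.val_succ]
  congr 2 <;> omega

theorem det_contSub_pos_of_signNonreversal {m n k : ℕ} (A : Matrix (Fin m) (Fin n) ℝ)
    (h : ∀ s : ℕ, s + 1 ≤ k → ∀ (a b : ℕ) (ha : a + (s + 1) ≤ m) (hb : b + (s + 1) ≤ n),
      ∃ i : Fin (s + 1),
        0 < signAltMinorVec (contSub A a b s ha hb) i *
            (contSub A a b s ha hb).mulVec (signAltMinorVec (contSub A a b s ha hb)) i)
    (s : ℕ) (hs : s + 1 ≤ k) (a b : ℕ) (ha : a + (s + 1) ≤ m) (hb : b + (s + 1) ≤ n) :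
    0 < (contSub A a b s ha hb).det := by
  induction s generalizing a b with
  | zero => exact det_pos_of_exists_signAltMinorVec_mul_mulVec_pos _ (by simp) (h 0 hs a b ha hb)
  | succ s ih =>
    refine det_pos_of_exists_signAltMinorVec_mul_mulVec_pos _ ?_ (h _ hs a b ha hb)
    rw [contSub_submatrix_succ_succ]
    exact ih (by omega) _ _ _ _

theorem stmt7_general {m n k : ℕ}
    (A : Matrix (Fin m) (Fin n) ℝ)
    (h : ∀ s : ℕ, s + 1 ≤ k → ∀ (a b : ℕ) (ha : a + (s + 1) ≤ m) (hb : b + (s + 1) ≤ n),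
      ∃ i : Fin (s + 1),
        0 < signAltMinorVec (contSub A a b s ha hb) i *
            (contSub A a b s ha hb).mulVec (signAltMinorVec (contSub A a b s ha hb)) i) :
    TotallyPositiveOfOrder A k :=
  totallyPositiveOfOrder_of_det_contSub_pos A (det_contSub_pos_of_signNonreversal A h)

/-- If every contiguous square submatrix `B` of `A` of size at most `k` has the sign
non-reversal property with respect to the single vector `x^B = (B¹¹, -B¹², …)`, then `A`
is totally positive of order `k`. -/
theorem stmt7 {m n k : ℕ} (hk : 1 ≤ k) (hm : k ≤ m) (hn : k ≤ n)
    (A : Matrix (Fin m) (Fin n) ℝ)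
    (h : ∀ s : ℕ, s + 1 ≤ k → ∀ (a b : ℕ) (ha : a + (s + 1) ≤ m) (hb : b + (s + 1) ≤ n),
      ∃ i : Fin (s + 1),
        0 < signAltMinorVec (contSub A a b s ha hb) i *
            (contSub A a b s ha hb).mulVec (signAltMinorVec (contSub A a b s ha hb)) i) :
    TotallyPositiveOfOrder A k :=
  stmt7_general A h
end

section
/- Let m, n ≥ k ≥ 1 and A ∈ ℝ^{m×n} be totally positive of order k (all minors of size ≤ k are positive). Then every square submatrix B of A of size r ∈ [k] has the sign non-reversal property on ℝʳ: for every nonzero x ∈ ℝʳ there exists i with xᵢ(Bx)ᵢ > 0. In particular, with x^B the first column of adj(B), there is an i with x^B_i (B x^B)_i > 0. -/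
open Matrix

/-- A matrix all of whose principal minors are positive stays of positive determinant
after adding a nonnegative diagonal matrix. -/
lemma det_add_diagonal_pos :
    ∀ (r : ℕ) (B : Matrix (Fin r) (Fin r) ℝ),
      (∀ (s : ℕ) (h : Fin s → Fin r), StrictMono h → 0 < (B.submatrix h h).det) →
      ∀ d : Fin r → ℝ, (∀ i, 0 ≤ d i) → 0 < (B + Matrix.diagonal d).det := by
  intro r
  induction r with
  | zero =>
    intro B _ d _
    simp [Matrix.det_isEmpty]
  | succ n ih =>
    intro B hB d hd
    suffices H : ∀ s : Finset (Fin (n+1)), ∀ d : Fin (n+1) → ℝ, (∀ i, 0 ≤ d i) →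
        (∀ i ∉ s, d i = 0) → 0 < (B + Matrix.diagonal d).det by
      exact H Finset.univ d hd (by simp)
    intro s
    induction s using Finset.induction_on with
    | empty =>
      intro d hd h0
      have hd0 : d = 0 := funext fun i => h0 i (by simp)
      have hdz : Matrix.diagonal d = 0 := by rw [hd0]; exact Matrix.diagonal_zero
      rw [hdz, add_zero]
      have := hB (n+1) id strictMono_id
      simpa [Matrix.submatrix_id_id] using this
    | @insert a t ha iht =>
      intro d hd h0
      set d' : Fin (n+1) → ℝ := Function.update d a 0 with hd'def
      have hd'0 : ∀ i, 0 ≤ d' i := by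
        intro i
        by_cases h : i = a
        · simp [hd'def, h]
        · simpa [hd'def, Function.update, h] using hd i
      have hd't : ∀ i ∉ t, d' i = 0 := by
        intro i hi
        by_cases h : i = a
        · simp [hd'def, h]
        · have : i ∉ insert a t := by simp [h, hi]
          simpa [hd'def, Function.update, h] using h0 i this
      have hrow : B + Matrix.diagonal d =
          Matrix.updateRow (B + Matrix.diagonal d') a
            ((B + Matrix.diagonal d') a + d a • (Pi.single a 1 : Fin (n+1) → ℝ)) := by
        ext i j
        by_cases h : i = a
        · subst h
          by_cases hj : i = j <;>
            simp [Matrix.diagonal_apply, hd'def, Function.update, Pi.single_apply, hj, eq_comm]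
        · simp [Matrix.updateRow_ne h, Matrix.diagonal_apply, hd'def, Function.update, h]
      rw [hrow, Matrix.det_updateRow_add, Matrix.det_updateRow_smul,
        Matrix.updateRow_eq_self]
      have h1 : 0 < (B + Matrix.diagonal d').det := iht d' hd'0 hd't
      have h2 : 0 < ((B + Matrix.diagonal d').updateRow a (Pi.single a 1)).det := by
        have hadj : ((B + Matrix.diagonal d').updateRow a (Pi.single a 1)).det =
            (B + Matrix.diagonal d').adjugate a a := (Matrix.adjugate_apply _ a a).symm
        rw [hadj, Matrix.adjugate_fin_succ_eq_det_submatrix]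
        have hsub : (B + Matrix.diagonal d').submatrix a.succAbove a.succAbove =
            B.submatrix a.succAbove a.succAbove +
              Matrix.diagonal (fun i => d' (a.succAbove i)) := by
          ext i j
          by_cases h : i = j
          · subst h; simp
          · have hne : a.succAbove i ≠ a.succAbove j :=
              fun hc => h ((Fin.succAbove_right_injective) hc)
            simp [Matrix.diagonal_apply_ne _ h, Matrix.diagonal_apply_ne _ hne]
        have heven : ((-1 : ℝ)) ^ ((a : ℕ) + (a : ℕ)) = 1 :=
          Even.neg_one_pow ⟨(a : ℕ), rfl⟩
        rw [hsub, heven, one_mul]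
        apply ih
        · intro s h hmono
          have := hB s (a.succAbove ∘ h) ((Fin.strictMono_succAbove a).comp hmono)
          simpa [Matrix.submatrix_submatrix] using this
        · exact fun i => hd'0 _
      have h3 : 0 ≤ d a * ((B + Matrix.diagonal d').updateRow a (Pi.single a 1)).det :=
        mul_nonneg (hd a) h2.le
      linarith

/-- Sign non-reversal for matrices with positive principal minors (Fiedler–Pták). -/
lemma sign_non_reversal {r : ℕ} (B : Matrix (Fin r) (Fin r) ℝ)
    (hB : ∀ (s : ℕ) (h : Fin s → Fin r), StrictMono h → 0 < (B.submatrix h h).det)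
    (x : Fin r → ℝ) (hx : x ≠ 0) :
    ∃ i, 0 < x i * (B.mulVec x) i := by
  by_contra hcon
  push_neg at hcon
  classical
  set S : Finset (Fin r) := Finset.univ.filter (fun i => x i ≠ 0) with hS
  set c : ℕ := S.card with hc
  set e : Fin c ↪o Fin r := S.orderEmbOfFin rfl with he
  have hmem : ∀ j : Fin c, e j ∈ S := fun j => Finset.orderEmbOfFin_mem S rfl j
  have hxne : ∀ j : Fin c, x (e j) ≠ 0 := by
    intro j
    have := hmem j
    rw [hS, Finset.mem_filter] at this
    exact this.2
  have himg : Finset.image (⇑e) Finset.univ = S := by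
    apply Finset.eq_of_subset_of_card_le
    · intro i hi
      rcases Finset.mem_image.mp hi with ⟨j, _, rfl⟩
      exact hmem j
    · rw [Finset.card_image_of_injective _ e.injective]
      simp [hc]
  set d : Fin c → ℝ := fun i => -((B.mulVec x) (e i)) / x (e i) with hd
  set y : Fin c → ℝ := fun i => x (e i) with hy
  set B' : Matrix (Fin c) (Fin c) ℝ := B.submatrix (⇑e) (⇑e) with hB'
  have hd0 : ∀ i, 0 ≤ d i := by
    intro i
    have hprod : x (e i) * (B.mulVec x) (e i) ≤ 0 := hcon (e i)
    have hx2 : (0:ℝ) < x (e i) ^ 2 :=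
      lt_of_le_of_ne (sq_nonneg _) (Ne.symm (pow_ne_zero 2 (hxne i)))
    have : (B.mulVec x) (e i) / x (e i) =
        (x (e i) * (B.mulVec x) (e i)) / (x (e i))^2 := by
      rw [pow_two, mul_div_mul_left _ _ (hxne i)]
    have hle : (B.mulVec x) (e i) / x (e i) ≤ 0 := by
      rw [this]
      exact div_nonpos_of_nonpos_of_nonneg hprod hx2.le
    rw [hd]
    simpa [neg_div] using neg_nonneg.mpr hle
  have hsum : ∀ F : Fin r → ℝ, (∑ j : Fin c, F (e j)) = ∑ j ∈ S, F j := by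
    intro F
    rw [← himg, Finset.sum_image (fun a _ b _ hab => e.injective hab)]
  have hker : (B' + Matrix.diagonal d).mulVec y = 0 := by
    funext i
    have hBx : (∑ j : Fin c, B (e i) (e j) * x (e j)) = (B.mulVec x) (e i) := by
      have h1 := hsum (fun j => B (e i) j * x j)
      rw [Matrix.mulVec, dotProduct]
      rw [h1]
      apply Finset.sum_subset (Finset.subset_univ S)
      intro j _ hj
      have : x j = 0 := by
        by_contra hne
        exact hj (by simp [hS, hne])
      simp [this]
    have hdiag : (Matrix.diagonal d).mulVec y i = -((B.mulVec x) (e i)) := by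
      rw [Matrix.mulVec_diagonal]
      rw [hd, hy]
      simp only
      rw [div_mul_cancel₀ _ (hxne i)]
    have hB'v : B'.mulVec y i = (B.mulVec x) (e i) := by
      rw [hB', Matrix.mulVec, dotProduct]
      simpa [Matrix.submatrix_apply, hy] using hBx
    rw [Matrix.add_mulVec]
    simp only [Pi.add_apply, Pi.zero_apply]
    rw [hB'v, hdiag]
    ring
  have hy0 : y ≠ 0 := by
    intro h
    rcases Function.ne_iff.mp hx with ⟨i0, hi0⟩
    simp only [Pi.zero_apply] at hi0
    have hi0S : i0 ∈ S := by simp [hS, hi0]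
    rw [← himg, Finset.mem_image] at hi0S
    rcases hi0S with ⟨j, _, hj⟩
    have := congrFun h j
    rw [hy] at this
    simp only [Pi.zero_apply] at this
    rw [hj] at this
    exact hi0 this
  have hdet0 : (B' + Matrix.diagonal d).det = 0 :=
    (Matrix.exists_mulVec_eq_zero_iff).mp ⟨y, hy0, hker⟩
  have hdetpos : 0 < (B' + Matrix.diagonal d).det := by
    apply det_add_diagonal_pos
    · intro s h hmono
      have := hB s (⇑e ∘ h) (e.strictMono.comp hmono)
      simpa [hB', Matrix.submatrix_submatrix] using this
    · exact hd0
  rw [hdet0] at hdetpos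
  exact lt_irrefl 0 hdetpos

/-- If `A` is `TP_k` then every square submatrix `B` of size `r ∈ [k]` has the sign
non-reversal property on `ℝʳ`; in particular for the first column of `adj(B)`. -/
theorem stmt8 {m n k : ℕ} (hk : 1 ≤ k) (hm : k ≤ m) (hn : k ≤ n)
    (A : Matrix (Fin m) (Fin n) ℝ) (hTP : TotallyPositiveOfOrder A k) :
    ∀ r : ℕ, ∀ hr : 1 ≤ r, r ≤ k → ∀ (f : Fin r → Fin m) (g : Fin r → Fin n),
      StrictMono f → StrictMono g →
      (∀ x : Fin r → ℝ, x ≠ 0 →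
        ∃ i, 0 < x i * ((A.submatrix f g).mulVec x) i)
      ∧ ∃ i, 0 < (A.submatrix f g).adjugate i ⟨0, hr⟩ *
          ((A.submatrix f g).mulVec (fun p => (A.submatrix f g).adjugate p ⟨0, hr⟩)) i := by
  intro r hr hrk f g hf hg
  set B : Matrix (Fin r) (Fin r) ℝ := A.submatrix f g with hBdef
  have hPmat : ∀ (s : ℕ) (h : Fin s → Fin r), StrictMono h → 0 < (B.submatrix h h).det := by
    intro s h hmono
    have hsr : s ≤ r := by
      simpa using Fintype.card_le_of_injective h hmono.injective
    have := hTP s (hsr.trans hrk) (f ∘ h) (g ∘ h) (hf.comp hmono) (hg.comp hmono)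
    simpa [hBdef, Matrix.submatrix_submatrix] using this
  have part1 : ∀ x : Fin r → ℝ, x ≠ 0 → ∃ i, 0 < x i * (B.mulVec x) i :=
    fun x hx => sign_non_reversal B hPmat x hx
  refine ⟨part1, ?_⟩
  set j0 : Fin r := ⟨0, hr⟩ with hj0
  set xB : Fin r → ℝ := fun p => B.adjugate p j0 with hxB
  have hdetB : 0 < B.det := by
    have := hPmat r id strictMono_id
    simpa [Matrix.submatrix_id_id] using this
  have hmv : B.mulVec xB = fun i => B.det * (1 : Matrix (Fin r) (Fin r) ℝ) i j0 := by
    funext i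
    have h := congrFun (congrFun (Matrix.mul_adjugate B) i) j0
    rw [Matrix.mul_apply] at h
    rw [Matrix.mulVec, dotProduct]
    simpa [hxB, Matrix.smul_apply, smul_eq_mul] using h
  have hxBne : xB ≠ 0 := by
    intro h
    have h1 : B.mulVec xB j0 = B.det := by
      rw [hmv]; simp [Matrix.one_apply]
    rw [h] at h1
    rw [Matrix.mulVec_zero] at h1
    simp only [Pi.zero_apply] at h1
    exact hdetB.ne h1
  exact part1 xB hxBne
end

section
/- Let A be an m×n totally positive matrix. Then for every r ∈ [min(m,n)] and every contiguous r×r submatrix A_r of A, the vector x^{A_r} := (A_r¹¹, −A_r¹², ..., (−1)^{r−1}A_r^{1r})ᵀ satisfies S⁺(A_r x^{A_r}) ≤ S⁻(x^{A_r}); in fact both sides equal r−1, and the first component of A_r x^{A_r} is positive, matching the sign of the first component of x^{A_r}. -/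
open Matrix

/-- `S⁻(x)`: the number of sign changes of `x` after deleting its zero entries
(one less than the maximal length of a strictly alternating subsequence). -/
noncomputable def Sminus {n : ℕ} (x : Fin n → ℝ) : ℕ :=
  sSup {m | ∃ f : Fin (m + 1) → Fin n, StrictMono f ∧
    ∀ i : Fin m, x (f i.castSucc) * x (f i.succ) < 0}

open Classical in
/-- `S⁺(x)`: the maximal number of sign changes obtainable by replacing the zero entries of
`x` by nonzero values, with the convention `S⁺(0) = n`. -/
noncomputable def Splus {n : ℕ} (x : Fin n → ℝ) : ℕ :=
  if x = 0 then n
  else sSup {m | ∃ y : Fin n → ℝ, (∀ i, y i ≠ 0) ∧ (∀ i, x i ≠ 0 → y i = x i) ∧ m = Sminus y}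

lemma Sminus_mem_zero {n : ℕ} (x : Fin (n + 1) → ℝ) :
    0 ∈ {m | ∃ f : Fin (m + 1) → Fin (n + 1), StrictMono f ∧
      ∀ i : Fin m, x (f i.castSucc) * x (f i.succ) < 0} :=
  ⟨fun _ => 0, fun a b h => by
    have ha := a.isLt; have hb := b.isLt
    rw [Fin.lt_def] at h; omega,
    fun i => i.elim0⟩

lemma Sminus_bdd {n : ℕ} (x : Fin (n + 1) → ℝ) :
    ∀ k ∈ {m | ∃ f : Fin (m + 1) → Fin (n + 1), StrictMono f ∧
      ∀ i : Fin m, x (f i.castSucc) * x (f i.succ) < 0}, k ≤ n := by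
  rintro k ⟨f, hf, -⟩
  have := Fintype.card_le_of_injective f hf.injective
  simpa using this

lemma Sminus_le {n : ℕ} (x : Fin (n + 1) → ℝ) : Sminus x ≤ n :=
  csSup_le ⟨0, Sminus_mem_zero x⟩ (Sminus_bdd x)

lemma Sminus_eq_of_alt {n : ℕ} (x : Fin (n + 1) → ℝ)
    (h : ∀ i : Fin n, x i.castSucc * x i.succ < 0) : Sminus x = n := by
  refine le_antisymm (Sminus_le x) (le_csSup ⟨n, Sminus_bdd x⟩ ?_)
  exact ⟨id, strictMono_id, h⟩

/-- If `A` is totally positive then for every contiguous `r×r` submatrix `B` and the vector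
`x^B = (B¹¹, -B¹², …)` one has `S⁺(B x^B) ≤ S⁻(x^B)`; in fact both sides equal `r - 1`, the
first component of `B x^B` is positive, and it matches the sign of the first component
of `x^B`. -/
theorem stmt12 {m n : ℕ} (A : Matrix (Fin m) (Fin n) ℝ)
    (hTP : ∀ r : ℕ, ∀ (f : Fin r → Fin m) (g : Fin r → Fin n),
      StrictMono f → StrictMono g → 0 < (A.submatrix f g).det) :
    ∀ (s a b : ℕ) (ha : a + (s + 1) ≤ m) (hb : b + (s + 1) ≤ n),
      Splus ((contSub A a b s ha hb).mulVec (signAltMinorVec (contSub A a b s ha hb)))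
        ≤ Sminus (signAltMinorVec (contSub A a b s ha hb))
      ∧ Splus ((contSub A a b s ha hb).mulVec (signAltMinorVec (contSub A a b s ha hb))) = s
      ∧ Sminus (signAltMinorVec (contSub A a b s ha hb)) = s
      ∧ 0 < (contSub A a b s ha hb).mulVec (signAltMinorVec (contSub A a b s ha hb)) 0
      ∧ 0 < (contSub A a b s ha hb).mulVec (signAltMinorVec (contSub A a b s ha hb)) 0 *
            signAltMinorVec (contSub A a b s ha hb) 0 := by
  intro s a b ha hb
  set B := contSub A a b s ha hb with hB
  set x := signAltMinorVec B with hx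
  -- every submatrix of B along strictly monotone maps has positive determinant
  have hsub : ∀ (r : ℕ) (f g : Fin r → Fin (s + 1)), StrictMono f → StrictMono g →
      0 < (B.submatrix f g).det := by
    intro r f g hf hg
    have hF : StrictMono (fun i : Fin r => (⟨a + f i, by have := (f i).isLt; omega⟩ : Fin m)) := by
      intro i j hij
      simp only [Fin.mk_lt_mk]
      exact Nat.add_lt_add_left (hf hij) a
    have hG : StrictMono (fun i : Fin r => (⟨b + g i, by have := (g i).isLt; omega⟩ : Fin n)) := by
      intro i j hij
      simp only [Fin.mk_lt_mk]
      exact Nat.add_lt_add_left (hg hij) b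
    have : B.submatrix f g = A.submatrix
        (fun i : Fin r => (⟨a + f i, by have := (f i).isLt; omega⟩ : Fin m))
        (fun i : Fin r => (⟨b + g i, by have := (g i).isLt; omega⟩ : Fin n)) := rfl
    rw [this]
    exact hTP r _ _ hF hG
  have hdetB : 0 < B.det := by
    have := hsub (s + 1) id id strictMono_id strictMono_id
    simpa using this
  have hminor : ∀ j : Fin (s + 1), 0 < (B.submatrix Fin.succ j.succAbove).det := fun j =>
    hsub s Fin.succ j.succAbove Fin.strictMono_succ (Fin.strictMono_succAbove j)
  -- the mulVec is (det B) • e₀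
  have hmv : ∀ i, B.mulVec x i = if i = 0 then B.det else 0 := by
    intro i
    have key : B.mulVec x i = (B.updateRow 0 (B i)).det := by
      rw [Matrix.det_succ_row_zero]
      simp only [Matrix.mulVec, dotProduct, hx, signAltMinorVec]
      refine Finset.sum_congr rfl fun j _ => ?_
      have h1 : B.updateRow 0 (B i) 0 j = B i j := by simp
      have h2 : (B.updateRow 0 (B i)).submatrix Fin.succ j.succAbove =
          B.submatrix Fin.succ j.succAbove := by
        ext p q
        simp [Matrix.updateRow_ne (Fin.succ_ne_zero p)]
      rw [h1, h2]; ring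
    rw [key]
    split_ifs with hi
    · subst hi; rw [Matrix.updateRow_eq_self]
    · exact Matrix.det_zero_of_row_eq (Ne.symm hi)
        (by funext j; simp [Matrix.updateRow_ne hi])
  -- x alternates in sign
  have halt : ∀ i : Fin s, x i.castSucc * x i.succ < 0 := by
    intro i
    have h1 := hminor i.castSucc
    have h2 := hminor i.succ
    simp only [hx, signAltMinorVec, Fin.coe_castSucc, Fin.val_succ]
    have : (-1 : ℝ) ^ (i : ℕ) * (B.submatrix Fin.succ i.castSucc.succAbove).det *
        ((-1 : ℝ) ^ ((i : ℕ) + 1) * (B.submatrix Fin.succ i.succ.succAbove).det)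
        = -(((-1 : ℝ) ^ (i : ℕ))^2 * ((B.submatrix Fin.succ i.castSucc.succAbove).det *
          (B.submatrix Fin.succ i.succ.succAbove).det)) := by ring
    rw [this]
    simp only [neg_neg, ← neg_pos, neg_neg]
    positivity
  have hSminus : Sminus x = s := Sminus_eq_of_alt x halt
  have hx0 : 0 < x 0 := by
    have := hminor 0
    simpa [hx, signAltMinorVec] using this
  have hmv0 : 0 < B.mulVec x 0 := by rw [hmv 0]; simpa using hdetB
  -- Splus computation
  have hne : B.mulVec x ≠ 0 := by
    intro h
    have := congrFun h 0
    rw [hmv 0] at this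
    simp at this
    exact absurd this (ne_of_gt hdetB)
  have hSplus : Splus (B.mulVec x) = s := by
    classical
    rw [Splus, if_neg hne]
    set y : Fin (s + 1) → ℝ := fun j => (-1 : ℝ) ^ (j : ℕ) * B.det with hy
    have hyne : ∀ i, y i ≠ 0 := by
      intro i
      simp only [hy]
      positivity
    have hyagree : ∀ i, B.mulVec x i ≠ 0 → y i = B.mulVec x i := by
      intro i hi
      rw [hmv i] at hi ⊢
      by_cases h0 : i = 0
      · subst h0; simp [hy]
      · simp [h0] at hi
    have hySm : Sminus y = s := by
      apply Sminus_eq_of_alt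
      intro i
      simp only [hy, Fin.coe_castSucc, Fin.val_succ]
      have : (-1 : ℝ) ^ (i : ℕ) * B.det * ((-1 : ℝ) ^ ((i : ℕ) + 1) * B.det)
          = -(((-1 : ℝ) ^ (i : ℕ))^2 * (B.det * B.det)) := by ring
      rw [this, neg_lt_zero]
      positivity
    have hmem : s ∈ {k | ∃ y : Fin (s + 1) → ℝ, (∀ i, y i ≠ 0) ∧
        (∀ i, B.mulVec x i ≠ 0 → y i = B.mulVec x i) ∧ k = Sminus y} :=
      ⟨y, hyne, hyagree, hySm.symm⟩
    have hbdd : ∀ k ∈ {k | ∃ y : Fin (s + 1) → ℝ, (∀ i, y i ≠ 0) ∧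
        (∀ i, B.mulVec x i ≠ 0 → y i = B.mulVec x i) ∧ k = Sminus y}, k ≤ s := by
      rintro k ⟨y, -, -, rfl⟩
      exact Sminus_le y
    exact le_antisymm (csSup_le ⟨s, hmem⟩ hbdd) (le_csSup ⟨s, hbdd⟩ hmem)
  refine ⟨?_, hSplus, hSminus, hmv0, mul_pos hmv0 hx0⟩
  rw [hSplus, hSminus]
end
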